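/- Suppose Z is binary, E[Z | X] = Xα is linear in X, and both the reduced-form and first-stage coefficients on Z exist, with ω(X) = E[D | Z=1, X] − E[D | Z=0, X] satisfying E[Var[Z|X]·ω(X)] ≠ 0. Then the linear IV estimand β_IV (the ratio of the coefficient on Z in the linear projection of Y on (Z,X) to the coefficient on Z in the linear projection of D on (Z,X)) equals E[Var[Z|X] · ω(X) · β(X)] / E[Var[Z|X] · ω(X)], where β(X) = φ(X)/ω(X) with φ(X) = E[Y | Z=1, X] − E[Y | Z=0, X]. -/

import Mathlib

open Finset

section Defs

variable {Ω 𝓧 : Type*} [Fintype Ω]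

/-- Expectation of `f` under weights `p` on a finite outcome space. -/
noncomputable def pexp (p : Ω → ℝ) (f : Ω → ℝ) : ℝ := ∑ ω, p ω * f ω

open Classical in
/-- Probability of the event `A` under weights `p`. -/
noncomputable def pprob (p : Ω → ℝ) (A : Ω → Prop) : ℝ := ∑ ω, if A ω then p ω else 0

open Classical in
/-- Conditional expectation of `f` given the event `A`. -/
noncomputable def eexp (p : Ω → ℝ) (A : Ω → Prop) (f : Ω → ℝ) : ℝ :=
  (∑ ω, if A ω then p ω * f ω else 0) / pprob p A

/-- Conditional probability of `A` given `B`. -/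
noncomputable def cprob (p : Ω → ℝ) (A B : Ω → Prop) : ℝ :=
  pprob p (fun ω => A ω ∧ B ω) / pprob p B

/-- `p` is a probability vector. -/
def IsProb (p : Ω → ℝ) : Prop := (∀ ω, 0 ≤ p ω) ∧ ∑ ω, p ω = 1

/-- Conditional expectation of `f` given `X = x`. -/
noncomputable def condMean (p : Ω → ℝ) (X : Ω → 𝓧) (f : Ω → ℝ) (x : 𝓧) : ℝ :=
  eexp p (fun ω => X ω = x) f

/-- Conditional expectation of `f` given `X = x` and `Z = z`. -/
noncomputable def condMeanOn (p : Ω → ℝ) (X : Ω → 𝓧) (Z : Ω → ℝ) (f : Ω → ℝ) (x : 𝓧) (z : ℝ) : ℝ :=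
  eexp p (fun ω => X ω = x ∧ Z ω = z) f

/-- Conditional cslope coefficient `E[f | Z=1, X=x] - E[f | Z=0, X=x]`. -/
noncomputable def cslope (p : Ω → ℝ) (X : Ω → 𝓧) (Z : Ω → ℝ) (f : Ω → ℝ) (x : 𝓧) : ℝ :=
  condMeanOn p X Z f x 1 - condMeanOn p X Z f x 0

/-- Conditional variance of `f` given the event `A`. -/
noncomputable def evVar (p : Ω → ℝ) (A : Ω → Prop) (f : Ω → ℝ) : ℝ :=
  eexp p A (fun ω => (f ω - eexp p A f) ^ 2)

/-- Conditional variance of `f` given `X = x`. -/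
noncomputable def condVar (p : Ω → ℝ) (X : Ω → 𝓧) (f : Ω → ℝ) (x : 𝓧) : ℝ :=
  evVar p (fun ω => X ω = x) f

end Defs

/-!
Write `e = Z - Xα`; linearity of `E[Z | X]` makes `e = Z - E[Z | X]` almost surely. For the
projection of `f` on `(Z, X)` with coefficients `(b, g)`, the normal equation in the direction
`(1, -α)` gives `b · E[Z e] = E[f e] - E[(X g) e]`. The last term vanishes because `e` is
orthogonal to every function of `X`, and conditioning on `X` turns `E[f e]` into
`E[Var(Z | X) · (E[f | Z = 1, X] - E[f | Z = 0, X])]` since `Z` is binary (Angrist 1998).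
Applied to `Y` and `D` this gives `β_IV = E[Var(Z|X) φ(X)] / E[Var(Z|X) ω(X)]`, and
`φ = ω β` wherever `X` has positive probability.
-/

section Expectation

variable {Ω : Type*} [Fintype Ω] {p : Ω → ℝ}

lemma pexp_congr_of_ne_zero {f g : Ω → ℝ} (h : ∀ ω, p ω ≠ 0 → f ω = g ω) :
    pexp p f = pexp p g :=
  Finset.sum_congr rfl fun ω _ => by
    rcases eq_or_ne (p ω) 0 with hω | hω
    · simp [hω]
    · rw [h ω hω]

open Classical in
noncomputable def pexpOn (p : Ω → ℝ) (A : Ω → Prop) (f : Ω → ℝ) : ℝ :=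
  ∑ ω, if A ω then p ω * f ω else 0

lemma eexp_eq_pexpOn_div (A : Ω → Prop) (f : Ω → ℝ) :
    eexp p A f = pexpOn p A f / pprob p A := rfl

lemma pexpOn_congr {A : Ω → Prop} {f g : Ω → ℝ} (h : ∀ ω, A ω → f ω = g ω) :
    pexpOn p A f = pexpOn p A g :=
  Finset.sum_congr rfl fun ω _ => by
    split_ifs with hA
    · rw [h ω hA]
    · rfl

lemma pexpOn_add (A : Ω → Prop) (f g : Ω → ℝ) :
    pexpOn p A (fun ω => f ω + g ω) = pexpOn p A f + pexpOn p A g := by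
  simp only [pexpOn, ← Finset.sum_add_distrib]
  exact Finset.sum_congr rfl fun ω _ => by split_ifs <;> ring

lemma pexpOn_const_mul (A : Ω → Prop) (c : ℝ) (f : Ω → ℝ) :
    pexpOn p A (fun ω => c * f ω) = c * pexpOn p A f := by
  simp only [pexpOn, Finset.mul_sum]
  exact Finset.sum_congr rfl fun ω _ => by split_ifs <;> ring

lemma pexpOn_const (A : Ω → Prop) (c : ℝ) : pexpOn p A (fun _ => c) = c * pprob p A := by
  simp only [pexpOn, pprob, Finset.mul_sum]
  exact Finset.sum_congr rfl fun ω _ => by split_ifs <;> ring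

lemma pexpOn_eq_zero (hp : ∀ ω, 0 ≤ p ω) {A : Ω → Prop} (hA : pprob p A = 0) (f : Ω → ℝ) :
    pexpOn p A f = 0 := by
  classical
  have hzero := (Finset.sum_eq_zero_iff_of_nonneg fun ω _ => by
    split_ifs <;> simp [hp ω]).1 hA
  refine Finset.sum_eq_zero fun ω hω => ?_
  have := hzero ω hω
  split_ifs at this ⊢ <;> simp [this]

lemma pprob_pos_of_ne_zero (hp : ∀ ω, 0 ≤ p ω) {A : Ω → Prop} {ω : Ω} (hA : A ω)
    (hω : p ω ≠ 0) : 0 < pprob p A := by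
  classical
  calc 0 < p ω := (hp ω).lt_of_ne' hω
    _ ≤ pprob p A := by
      simpa [pprob, hA] using Finset.single_le_sum (f := fun ω' => if A ω' then p ω' else 0)
        (fun ω' _ => by split_ifs <;> simp [hp ω']) (Finset.mem_univ ω)

lemma pexpOn_eq_eexp_mul_pprob (hp : ∀ ω, 0 ≤ p ω) (A : Ω → Prop) (f : Ω → ℝ) :
    pexpOn p A f = eexp p A f * pprob p A := by
  rcases eq_or_ne (pprob p A) 0 with hA | hA
  · rw [pexpOn_eq_zero hp hA, hA, mul_zero]
  · rw [eexp_eq_pexpOn_div, div_mul_cancel₀ _ hA]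

lemma pexp_eq_sum_pexpOn {𝓧 : Type*} [DecidableEq 𝓧] (X : Ω → 𝓧) (f : Ω → ℝ) :
    pexp p f = ∑ x ∈ Finset.univ.image X, pexpOn p (fun ω => X ω = x) f := by
  rw [pexp, ← Finset.sum_fiberwise_of_maps_to fun ω _ => Finset.mem_image_of_mem X
    (Finset.mem_univ ω)]
  refine Finset.sum_congr rfl fun x _ => ?_
  rw [Finset.sum_filter, pexpOn]
  exact Finset.sum_congr rfl fun ω _ => by split_ifs <;> rfl

lemma pexp_condMean (hp : ∀ ω, 0 ≤ p ω) {𝓧 : Type*} (X : Ω → 𝓧) (f : Ω → ℝ) :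
    pexp p (fun ω => condMean p X f (X ω)) = pexp p f := by
  classical
  rw [pexp_eq_sum_pexpOn X, pexp_eq_sum_pexpOn X]
  refine Finset.sum_congr rfl fun x _ => ?_
  rw [pexpOn_congr (g := fun _ => condMean p X f x) fun ω h => by rw [h], pexpOn_const,
    pexpOn_eq_eexp_mul_pprob hp]
  rfl

end Expectation

section BinaryInstrument

variable {Ω : Type*} [Fintype Ω] {p Z : Ω → ℝ}

lemma pexpOn_eq_add_of_binary (hZ : ∀ ω, Z ω = 0 ∨ Z ω = 1) (A : Ω → Prop) (f : Ω → ℝ) :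
    pexpOn p A f = pexpOn p (fun ω => A ω ∧ Z ω = 1) f + pexpOn p (fun ω => A ω ∧ Z ω = 0) f := by
  simp only [pexpOn, ← Finset.sum_add_distrib]
  refine Finset.sum_congr rfl fun ω _ => ?_
  rcases hZ ω with h | h <;> by_cases hA : A ω <;> simp [h, hA]

lemma pexpOn_of_binary (hZ : ∀ ω, Z ω = 0 ∨ Z ω = 1) (A : Ω → Prop) :
    pexpOn p A Z = pprob p (fun ω => A ω ∧ Z ω = 1) := by
  rw [pexpOn_eq_add_of_binary hZ, pexpOn_congr (g := fun _ => 1) fun ω h => h.2,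
    pexpOn_congr (p := p) (A := fun ω => A ω ∧ Z ω = 0) (g := fun _ => 0) fun ω h => h.2,
    pexpOn_const, pexpOn_const]
  ring

lemma evVar_of_binary (hZ : ∀ ω, Z ω = 0 ∨ Z ω = 1) (A : Ω → Prop) :
    evVar p A Z = eexp p A Z * (1 - eexp p A Z) := by
  set π := eexp p A Z with hπ
  rcases eq_or_ne (pprob p A) 0 with hA | hA
  · simp [evVar, hπ, eexp_eq_pexpOn_div, hA]
  -- `Z ^ 2 = Z` makes `(Z - π) ^ 2` affine in `Z`.
  have hsq : pexpOn p A (fun ω => (Z ω - π) ^ 2) =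
      (1 - 2 * π) * pexpOn p A Z + π ^ 2 * pprob p A := by
    rw [pexpOn_congr (g := fun ω => (1 - 2 * π) * Z ω + π ^ 2) fun ω _ => by
        rcases hZ ω with h | h <;> rw [h] <;> ring,
      pexpOn_add, pexpOn_const_mul, pexpOn_const]
  have hmean : pexpOn p A Z = π * pprob p A := by
    rw [hπ, eexp_eq_pexpOn_div, div_mul_cancel₀ _ hA]
  rw [evVar, eexp_eq_pexpOn_div, ← hπ, hsq, hmean]
  field_simp
  ring

lemma eexp_mul_sub_eexp_of_binary (hp : ∀ ω, 0 ≤ p ω) (hZ : ∀ ω, Z ω = 0 ∨ Z ω = 1)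
    (A : Ω → Prop) (f : Ω → ℝ) :
    eexp p A (fun ω => f ω * (Z ω - eexp p A Z)) =
      evVar p A Z * (eexp p (fun ω => A ω ∧ Z ω = 1) f - eexp p (fun ω => A ω ∧ Z ω = 0) f) := by
  set π := eexp p A Z with hπ
  set P₁ := pprob p (fun ω => A ω ∧ Z ω = 1)
  set P₀ := pprob p (fun ω => A ω ∧ Z ω = 0)
  set N₁ := pexpOn p (fun ω => A ω ∧ Z ω = 1) f
  set N₀ := pexpOn p (fun ω => A ω ∧ Z ω = 0) f
  have hsplit : pexpOn p A (fun ω => f ω * (Z ω - π)) = (1 - π) * N₁ - π * N₀ := by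
    rw [pexpOn_eq_add_of_binary hZ,
      pexpOn_congr (A := fun ω => A ω ∧ Z ω = 1) (g := fun ω => (1 - π) * f ω)
        fun ω h => by rw [h.2]; ring,
      pexpOn_congr (A := fun ω => A ω ∧ Z ω = 0) (g := fun ω => -π * f ω)
        fun ω h => by rw [h.2]; ring,
      pexpOn_const_mul, pexpOn_const_mul]
    ring
  rw [evVar_of_binary hZ, ← hπ, eexp_eq_pexpOn_div, hsplit,
    show eexp p (fun ω => A ω ∧ Z ω = 1) f = N₁ / P₁ from rfl,
    show eexp p (fun ω => A ω ∧ Z ω = 0) f = N₀ / P₀ from rfl]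
  rcases eq_or_ne (pprob p A) 0 with hA | hA
  · simp [hπ, eexp_eq_pexpOn_div, hA]
  have hP₁ : P₁ = π * pprob p A := by
    rw [hπ, eexp_eq_pexpOn_div, pexpOn_of_binary hZ, div_mul_cancel₀ _ hA]
  have hP₀ : P₀ = (1 - π) * pprob p A := by
    have hsum : pprob p A = P₁ + P₀ := by
      simpa only [pexpOn_const, one_mul] using pexpOn_eq_add_of_binary (p := p) hZ A (fun _ => 1)
    linear_combination -hsum - hP₁
  -- An empty cell forces `π ∈ {0, 1}` and kills the corresponding numerator.
  rcases eq_or_ne π 0 with h0 | h0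
  · rw [show N₁ = 0 from pexpOn_eq_zero hp (hP₁.trans (by rw [h0, zero_mul])) f, h0]
    ring
  rcases eq_or_ne π 1 with h1 | h1
  · rw [show N₀ = 0 from pexpOn_eq_zero hp (hP₀.trans (by rw [h1, sub_self, zero_mul])) f, h1]
    ring
  have : 1 - π ≠ 0 := sub_ne_zero.2 (Ne.symm h1)
  rw [hP₁, hP₀]
  field_simp

end BinaryInstrument

section Covariates

variable {Ω 𝓧 : Type*} [Fintype Ω] {p Z : Ω → ℝ} {X : Ω → 𝓧}

lemma pexp_mul_sub_condMean (hp : ∀ ω, 0 ≤ p ω) (hZ : ∀ ω, Z ω = 0 ∨ Z ω = 1) (f : Ω → ℝ) :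
    pexp p (fun ω => f ω * (Z ω - condMean p X Z (X ω))) =
      pexp p (fun ω => condVar p X Z (X ω) * cslope p X Z f (X ω)) := by
  rw [← pexp_condMean hp X]
  refine pexp_congr_of_ne_zero fun ω _ => ?_
  rw [condMean, eexp_eq_pexpOn_div,
    pexpOn_congr (g := fun ω' => f ω' * (Z ω' - condMean p X Z (X ω))) fun ω' h => by rw [h],
    ← eexp_eq_pexpOn_div]
  exact eexp_mul_sub_eexp_of_binary hp hZ _ f

lemma pexp_comp_mul_sub_condMean (hp : ∀ ω, 0 ≤ p ω) (h : 𝓧 → ℝ) :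
    pexp p (fun ω => h (X ω) * (Z ω - condMean p X Z (X ω))) = 0 := by
  rw [← pexp_condMean hp X]
  refine Finset.sum_eq_zero fun ω _ => ?_
  dsimp only
  rw [condMean, eexp_eq_pexpOn_div,
    pexpOn_congr (g := fun ω' => h (X ω) * Z ω' + -(h (X ω) * condMean p X Z (X ω)))
      fun ω' hω' => by rw [hω']; ring,
    pexpOn_add, pexpOn_const_mul, pexpOn_const, pexpOn_eq_eexp_mul_pprob hp, condMean]
  ring

lemma pexp_mul_sub_eq_of_condMean_eq (hp : ∀ ω, 0 ≤ p ω) {m : 𝓧 → ℝ}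
    (hm : ∀ x, 0 < pprob p (fun ω => X ω = x) → condMean p X Z x = m x) (g : Ω → ℝ) :
    pexp p (fun ω => g ω * (Z ω - m (X ω))) =
      pexp p (fun ω => g ω * (Z ω - condMean p X Z (X ω))) :=
  pexp_congr_of_ne_zero fun ω hω => by rw [hm _ (pprob_pos_of_ne_zero hp rfl hω)]

end Covariates

section LeastSquares

variable {Ω : Type*} [Fintype Ω] {p : Ω → ℝ}

lemma pexp_mul_eq_zero_of_forall_le {r s : Ω → ℝ}
    (hmin : ∀ t : ℝ, pexp p (fun ω => r ω ^ 2) ≤ pexp p (fun ω => (r ω - t * s ω) ^ 2)) :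
    pexp p (fun ω => r ω * s ω) = 0 := by
  have hquad : ∀ t : ℝ, 0 ≤ pexp p (fun ω => s ω ^ 2) * (t * t) +
      (-2 * pexp p (fun ω => r ω * s ω)) * t + 0 := fun t => by
    have hexp : pexp p (fun ω => (r ω - t * s ω) ^ 2) = pexp p (fun ω => r ω ^ 2) +
        (pexp p (fun ω => s ω ^ 2) * (t * t) + (-2 * pexp p (fun ω => r ω * s ω)) * t) := by
      simp only [pexp, Finset.mul_sum, Finset.sum_mul, ← Finset.sum_add_distrib]
      exact Finset.sum_congr rfl fun ω _ => by ring
    linarith [hmin t]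
  have := discrim_le_zero hquad
  rw [discrim] at this
  nlinarith [sq_nonneg (pexp p (fun ω => r ω * s ω))]

variable {k : ℕ} {X : Ω → Fin k → ℝ} {Z : Ω → ℝ}

lemma coeff_mul_pexp_eq_of_forall_le (α : Fin k → ℝ) {f : Ω → ℝ} {b : ℝ} {g : Fin k → ℝ}
    (hmin : ∀ (b' : ℝ) (g' : Fin k → ℝ),
      pexp p (fun ω => (f ω - Z ω * b - ∑ j, X ω j * g j) ^ 2) ≤
        pexp p (fun ω => (f ω - Z ω * b' - ∑ j, X ω j * g' j) ^ 2)) :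
    b * pexp p (fun ω => Z ω * (Z ω - ∑ j, X ω j * α j)) =
      pexp p (fun ω => f ω * (Z ω - ∑ j, X ω j * α j)) -
        pexp p (fun ω => (∑ j, X ω j * g j) * (Z ω - ∑ j, X ω j * α j)) := by
  have hnormal := pexp_mul_eq_zero_of_forall_le (p := p)
    (r := fun ω => f ω - Z ω * b - ∑ j, X ω j * g j) (s := fun ω => Z ω - ∑ j, X ω j * α j)
    fun t => by
      convert hmin (b + t) (fun j => g j - t * α j) using 3 with ω
      simp only [mul_sub, Finset.sum_sub_distrib, Finset.mul_sum]
      ring_nf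
  have hexpand : pexp p (fun ω => (f ω - Z ω * b - ∑ j, X ω j * g j) *
      (Z ω - ∑ j, X ω j * α j)) =
      pexp p (fun ω => f ω * (Z ω - ∑ j, X ω j * α j)) -
        b * pexp p (fun ω => Z ω * (Z ω - ∑ j, X ω j * α j)) -
        pexp p (fun ω => (∑ j, X ω j * g j) * (Z ω - ∑ j, X ω j * α j)) := by
    simp only [pexp, Finset.mul_sum, ← Finset.sum_sub_distrib]
    exact Finset.sum_congr rfl fun ω _ => by ring
  linarith

lemma coeff_mul_pexp_eq_pexp_condVar_mul_cslope (hp : ∀ ω, 0 ≤ p ω)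
    (hZ : ∀ ω, Z ω = 0 ∨ Z ω = 1) {α : Fin k → ℝ}
    (hlin : ∀ x : Fin k → ℝ, 0 < pprob p (fun ω => X ω = x) → condMean p X Z x = ∑ j, x j * α j)
    {f : Ω → ℝ} {b : ℝ} {g : Fin k → ℝ}
    (hmin : ∀ (b' : ℝ) (g' : Fin k → ℝ),
      pexp p (fun ω => (f ω - Z ω * b - ∑ j, X ω j * g j) ^ 2) ≤
        pexp p (fun ω => (f ω - Z ω * b' - ∑ j, X ω j * g' j) ^ 2)) :
    b * pexp p (fun ω => Z ω * (Z ω - ∑ j, X ω j * α j)) =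
      pexp p (fun ω => condVar p X Z (X ω) * cslope p X Z f (X ω)) := by
  rw [coeff_mul_pexp_eq_of_forall_le α hmin,
    pexp_mul_sub_eq_of_condMean_eq hp hlin f, pexp_mul_sub_condMean hp hZ,
    pexp_mul_sub_eq_of_condMean_eq hp hlin]
  exact sub_eq_self.2 (pexp_comp_mul_sub_condMean hp fun x : Fin k → ℝ => ∑ j, x j * g j)

end LeastSquares

/-- with binary `Z`, `E[Z|X] = Xα` linear, and
`E[Var[Z|X]·ω(X)] ≠ 0`, the linear IV estimand — the ratio of the coefficient on
`Z` in the linear projection of `Y` on `(Z,X)` to the coefficient on `Z` in the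
linear projection of `D` on `(Z,X)` — equals
`E[Var[Z|X]·ω(X)·β(X)] / E[Var[Z|X]·ω(X)]`, where `β(X) = φ(X)/ω(X)`. -/
theorem stmt5 {Ω : Type*} [Fintype Ω] {k : ℕ} (p : Ω → ℝ) (hp : IsProb p)
    (X : Ω → Fin k → ℝ) (Z Y D : Ω → ℝ) (hZ : ∀ ω, Z ω = 0 ∨ Z ω = 1)
    (α : Fin k → ℝ)
    (hlin : ∀ x : Fin k → ℝ, 0 < pprob p (fun ω => X ω = x) →
      condMean p X Z x = ∑ j, x j * α j)
    (hrel : ∀ x : Fin k → ℝ, 0 < pprob p (fun ω => X ω = x) → cslope p X Z D x ≠ 0)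
    (hden : pexp p (fun ω => condVar p X Z (X ω) * cslope p X Z D (X ω)) ≠ 0)
    (bY : ℝ) (gY : Fin k → ℝ)
    (hY : ∀ (b' : ℝ) (g' : Fin k → ℝ),
      pexp p (fun ω => (Y ω - Z ω * bY - ∑ j, X ω j * gY j) ^ 2) ≤
        pexp p (fun ω => (Y ω - Z ω * b' - ∑ j, X ω j * g' j) ^ 2))
    (bD : ℝ) (gD : Fin k → ℝ)
    (hD : ∀ (b' : ℝ) (g' : Fin k → ℝ),
      pexp p (fun ω => (D ω - Z ω * bD - ∑ j, X ω j * gD j) ^ 2) ≤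
        pexp p (fun ω => (D ω - Z ω * b' - ∑ j, X ω j * g' j) ^ 2)) :
    bY / bD =
      pexp p (fun ω => condVar p X Z (X ω) * cslope p X Z D (X ω) *
          (cslope p X Z Y (X ω) / cslope p X Z D (X ω))) /
        pexp p (fun ω => condVar p X Z (X ω) * cslope p X Z D (X ω)) := by
  have hY' := coeff_mul_pexp_eq_pexp_condVar_mul_cslope hp.1 hZ hlin hY
  have hD' := coeff_mul_pexp_eq_pexp_condVar_mul_cslope hp.1 hZ hlin hD
  have hnum : pexp p (fun ω => condVar p X Z (X ω) * cslope p X Z D (X ω) *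
      (cslope p X Z Y (X ω) / cslope p X Z D (X ω))) =
      pexp p (fun ω => condVar p X Z (X ω) * cslope p X Z Y (X ω)) :=
    pexp_congr_of_ne_zero fun ω hω => by
      rw [mul_assoc, mul_div_cancel₀ _ (hrel _ (pprob_pos_of_ne_zero hp.1 rfl hω))]
  rw [← hD'] at hden
  rw [hnum, ← hY', ← hD', mul_div_mul_right _ _ (right_ne_zero_of_mul hden)]
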